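/- arXiv:2406.00819 — 5 statements merged into one kernel-verified Lean document; each statement's English description precedes it below -/
import Mathlib

section
/- Let Y₁, ..., Yₙ be random variables taking values in [0,1] (not necessarily independent) such that ∑_{i=1}^n Yᵢ ≤ 1 almost surely. Then for any δ > 0, the probability that ∑_{i=1}^n E[Yᵢ | Y₁,...,Y_{i-1}] ≥ (e/(e-1))·ln(e/δ) is at most δ. -/
/-!
With `a = 1 - e⁻¹`, convexity of `exp` on `[0, 1]` gives `exp (-y) ≤ 1 - a y`, so conditioning on
the past, `E[exp (-Yᵢ) | ℱᵢ] ≤ 1 - a Xᵢ ≤ exp (-a Xᵢ)` where `Xᵢ = E[Yᵢ | ℱᵢ]`. Hence the factors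
`exp (a Xᵢ - Yᵢ)` have conditional expectation at most `1`, and their product
`exp (a ∑ Xᵢ - ∑ Yᵢ)` has expectation at most `1`. Since `∑ Yᵢ ≤ 1`, on the event
`∑ Xᵢ ≥ ln (e / δ) / a` this product is at least `1 / δ`, and Markov's inequality concludes.
-/

open MeasureTheory Real Set
open scoped ENNReal

section

variable {Ω : Type*} {m mΩ : MeasurableSpace Ω} {μ : Measure Ω}

lemma Real.exp_neg_le_one_sub_mul {y : ℝ} (hy : y ∈ Icc (0 : ℝ) 1) :
    exp (-y) ≤ 1 - (1 - exp (-1)) * y := by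
  have h := convexOn_exp.2 (mem_univ 0) (mem_univ (-1)) (sub_nonneg.2 hy.2) hy.1 (by ring)
  simp only [smul_eq_mul, mul_zero, zero_add, mul_neg, mul_one, exp_zero] at h
  linarith

lemma integrable_exp_neg [IsFiniteMeasure μ] {Y : Ω → ℝ} (hY : AEStronglyMeasurable Y μ)
    (hY0 : 0 ≤ᵐ[μ] Y) : Integrable (fun ω ↦ exp (-Y ω)) μ :=
  Integrable.of_bound (by fun_prop) 1 <| by
    filter_upwards [hY0] with ω hω
    rw [norm_of_nonneg (exp_pos _).le, exp_le_one_iff, neg_nonpos]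
    exact hω

lemma condExp_exp_neg_le [IsFiniteMeasure μ] (hm : m ≤ mΩ) {Y : Ω → ℝ}
    (hY : AEStronglyMeasurable Y μ) (hY01 : ∀ᵐ ω ∂μ, Y ω ∈ Icc (0 : ℝ) 1) :
    μ[fun ω ↦ exp (-Y ω) | m] ≤ᵐ[μ] fun ω ↦ 1 - (1 - exp (-1)) * μ[Y | m] ω := by
  set a := 1 - exp (-1)
  have hY_int : Integrable Y μ := Integrable.of_bound hY 1 <| by
    filter_upwards [hY01] with ω hω
    rw [norm_of_nonneg hω.1]
    exact hω.2
  have hexp_int := integrable_exp_neg hY (hY01.mono fun _ h ↦ h.1)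
  have hlin : μ[(fun _ ↦ (1 : ℝ)) - a • Y | m] =ᵐ[μ] fun ω ↦ 1 - a * μ[Y | m] ω := by
    filter_upwards [condExp_sub (integrable_const 1) (hY_int.smul a) m,
      condExp_smul (m := m) (μ := μ) a Y] with ω hsub hsmul
    rw [hsub, Pi.sub_apply, condExp_const hm, hsmul]
    rfl
  refine (condExp_mono hexp_int ((integrable_const 1).sub (hY_int.smul a)) ?_).trans hlin.le
  filter_upwards [hY01] with ω hω
  exact exp_neg_le_one_sub_mul hω

lemma memLp_top_exp_mul_condExp_sub [IsFiniteMeasure μ] (c : ℝ) {Y : Ω → ℝ}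
    (hY : AEStronglyMeasurable Y μ) (hY01 : ∀ᵐ ω ∂μ, Y ω ∈ Icc (0 : ℝ) 1) :
    MemLp (fun ω ↦ exp (c * μ[Y | m] ω - Y ω)) ∞ μ := by
  have hY_abs : ∀ᵐ ω ∂μ, |Y ω| ≤ 1 := by
    filter_upwards [hY01] with ω hω
    simpa [abs_of_nonneg hω.1] using hω.2
  refine memLp_top_of_bound (by fun_prop) (exp |c|) ?_
  filter_upwards [hY01, ae_bdd_abs_condExp_of_ae_bdd_abs (m := m) hY_abs] with ω hY hX
  rw [norm_of_nonneg (exp_pos _).le, exp_le_exp]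
  have hcX : c * μ[Y | m] ω ≤ |c| := by
    calc c * μ[Y | m] ω ≤ |c * μ[Y | m] ω| := le_abs_self _
      _ ≤ |c| := by
        rw [abs_mul]
        exact mul_le_of_le_one_right (abs_nonneg c) (by simpa using hX)
  linarith [hY.1]

lemma condExp_exp_mul_condExp_sub_le_one [IsFiniteMeasure μ] (hm : m ≤ mΩ) {Y : Ω → ℝ}
    (hY : AEStronglyMeasurable Y μ) (hY01 : ∀ᵐ ω ∂μ, Y ω ∈ Icc (0 : ℝ) 1) :
    μ[fun ω ↦ exp ((1 - exp (-1)) * μ[Y | m] ω - Y ω) | m] ≤ᵐ[μ] 1 := by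
  set a := 1 - exp (-1)
  set X := μ[Y | m]
  have hX_meas : StronglyMeasurable[m] fun ω ↦ exp (a * X ω) :=
    (measurable_exp.comp (stronglyMeasurable_condExp.measurable.const_mul a)).stronglyMeasurable
  have hsplit : (fun ω ↦ exp (a * X ω - Y ω)) = (fun ω ↦ exp (a * X ω)) * fun ω ↦ exp (-Y ω) := by
    ext ω
    simp only [Pi.mul_apply, sub_eq_add_neg, exp_add]
  have hexp_int := integrable_exp_neg hY (hY01.mono fun _ h ↦ h.1)
  have hprod_int := (memLp_top_exp_mul_condExp_sub (m := m) a hY hY01).integrable le_top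
  filter_upwards [condExp_mul_of_stronglyMeasurable_left hX_meas (hsplit ▸ hprod_int) hexp_int,
    condExp_exp_neg_le hm hY hY01] with ω hmul hle
  rw [hsplit, hmul, Pi.mul_apply, Pi.one_apply]
  calc exp (a * X ω) * μ[fun ω ↦ exp (-Y ω) | m] ω
      ≤ exp (a * X ω) * exp (-(a * X ω)) := by
        gcongr
        linarith [hle, add_one_le_exp (-(a * X ω))]
    _ = 1 := by rw [← exp_add, add_neg_cancel, exp_zero]

lemma integral_prod_le_one_of_condExp_le_one [IsProbabilityMeasure μ] (ℱ : Filtration ℕ mΩ)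
    {n : ℕ} {f : Fin n → Ω → ℝ} (hf_meas : ∀ i : Fin n, StronglyMeasurable[ℱ (i + 1)] (f i))
    (hf_bdd : ∀ i, MemLp (f i) ∞ μ) (hf_nonneg : ∀ i, 0 ≤ᵐ[μ] f i)
    (hf_condExp : ∀ i : Fin n, μ[f i | ℱ i] ≤ᵐ[μ] 1) :
    ∫ ω, ∏ i, f i ω ∂μ ≤ 1 := by
  induction n with
  | zero => simp
  | succ n ih =>
    set P := fun ω ↦ ∏ i : Fin n, f i.castSucc ω
    have hP_meas : StronglyMeasurable[ℱ n] P :=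
      Finset.stronglyMeasurable_fun_prod _ fun i _ ↦ (hf_meas i.castSucc).mono (ℱ.mono (by simp))
    have hP_bdd : MemLp P ∞ μ := by
      simpa using MemLp.prod' (s := .univ) (p := fun _ ↦ ∞) fun i _ ↦ hf_bdd i.castSucc
    have hP_nonneg : 0 ≤ᵐ[μ] P := by
      filter_upwards [ae_all_iff.2 fun i ↦ hf_nonneg (Fin.castSucc i)] with ω hω
      exact Finset.prod_nonneg fun i _ ↦ hω i
    have hlast_int := (hf_bdd (Fin.last n)).integrable le_top
    calc ∫ ω, ∏ i, f i ω ∂μ = ∫ ω, (P * f (Fin.last n)) ω ∂μ := by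
          simp only [Fin.prod_univ_castSucc, Pi.mul_apply, P]
      _ = ∫ ω, (P * μ[f (Fin.last n) | ℱ n]) ω ∂μ := by
          rw [← integral_condExp (ℱ.le n)]
          exact integral_congr_ae (condExp_mul_of_stronglyMeasurable_left hP_meas
            (hlast_int.mul_of_top_right hP_bdd) hlast_int)
      _ ≤ ∫ ω, P ω ∂μ := by
          refine integral_mono_ae ?_ (hP_bdd.integrable le_top) ?_
          · exact integrable_condExp.mul_of_top_right hP_bdd
          · filter_upwards [hP_nonneg, hf_condExp (Fin.last n)] with ω h0 h1
            simpa using mul_le_of_le_one_right h0 h1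
      _ ≤ 1 := ih (fun i ↦ hf_meas i.castSucc) (fun i ↦ hf_bdd i.castSucc)
          (fun i ↦ hf_nonneg i.castSucc) fun i ↦ hf_condExp i.castSucc

lemma measure_inv_le_le_of_integral_le_one [IsFiniteMeasure μ] {Z : Ω → ℝ}
    (hZ_nonneg : 0 ≤ᵐ[μ] Z) (hZ_int : Integrable Z μ) (hZ : ∫ ω, Z ω ∂μ ≤ 1) {δ : ℝ}
    (hδ : 0 < δ) : μ {ω | δ⁻¹ ≤ Z ω} ≤ ENNReal.ofReal δ := by
  have hmarkov := (mul_meas_ge_le_integral_of_nonneg hZ_nonneg hZ_int δ⁻¹).trans hZ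
  rw [← ofReal_measureReal]
  exact ENNReal.ofReal_le_ofReal (by simpa using (inv_mul_le_iff₀ hδ).1 hmarkov)

lemma inv_le_exp_mul_sub_of_le {δ s x : ℝ} (hδ : 0 < δ) (hs : s ≤ 1)
    (hx : exp 1 / (exp 1 - 1) * log (exp 1 / δ) ≤ x) : δ⁻¹ ≤ exp ((1 - exp (-1)) * x - s) := by
  have he : 1 < exp 1 := one_lt_exp_iff.2 one_pos
  have ha : 0 ≤ 1 - exp (-1) := by simp [exp_neg, inv_le_one_of_one_le₀ he.le]
  have hax : log (exp 1 / δ) ≤ (1 - exp (-1)) * x := by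
    have hcancel : (1 - exp (-1)) * (exp 1 / (exp 1 - 1)) = 1 := by
      rw [exp_neg]
      field_simp [(sub_pos.2 he).ne']
    simpa [← mul_assoc, hcancel] using mul_le_mul_of_nonneg_left hx ha
  calc δ⁻¹ = exp (log (exp 1 / δ) - 1) := by
        rw [exp_sub, exp_log (by positivity)]
        field_simp
    _ ≤ exp ((1 - exp (-1)) * x - s) := exp_le_exp.2 (by linarith)

-- Indexed by `ℕ` rather than `Fin n`, so that the last `Y i` is also measurable at time `i + 1`.
def Filtration.strictPast {β : Type*} [MeasurableSpace β] {n : ℕ} (Y : Fin n → Ω → β)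
    (hY : ∀ i, Measurable (Y i)) : Filtration ℕ mΩ where
  seq k := ⨆ (j : Fin n) (_ : (j : ℕ) < k), MeasurableSpace.comap (Y j) ‹_›
  mono' _ _ hkl := iSup₂_mono' fun j hj ↦ ⟨j, hj.trans_le hkl, le_rfl⟩
  le' _ := iSup₂_le fun j _ ↦ (hY j).comap_le

lemma Filtration.strictPast_apply {β : Type*} [MeasurableSpace β] {n : ℕ}
    (Y : Fin n → Ω → β) (hY : ∀ i, Measurable (Y i)) (k : ℕ) :
    Filtration.strictPast Y hY k =
      ⨆ (j : Fin n) (_ : (j : ℕ) < k), MeasurableSpace.comap (Y j) ‹_› :=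
  rfl

lemma Filtration.measurable_strictPast {β : Type*} [MeasurableSpace β] {n : ℕ}
    {Y : Fin n → Ω → β} (hY : ∀ i, Measurable (Y i)) {j : Fin n} {k : ℕ} (hjk : (j : ℕ) < k) :
    Measurable[Filtration.strictPast Y hY k] (Y j) := by
  rw [measurable_iff_comap_le, Filtration.strictPast_apply]
  exact le_iSup₂ (f := fun (j : Fin n) (_ : (j : ℕ) < k) ↦ MeasurableSpace.comap (Y j) ‹_›) j hjk

end

theorem stmt_2 {Ω : Type*} [MeasurableSpace Ω] (μ : Measure Ω) [IsProbabilityMeasure μ]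
    (n : ℕ) (Y : Fin n → Ω → ℝ)
    (hmeas : ∀ i, Measurable (Y i))
    (hbound : ∀ i, ∀ᵐ ω ∂μ, Y i ω ∈ Set.Icc (0 : ℝ) 1)
    (hsum : ∀ᵐ ω ∂μ, ∑ i, Y i ω ≤ 1)
    (δ : ℝ) (hδ : 0 < δ) :
    μ {ω | (Real.exp 1 / (Real.exp 1 - 1)) * Real.log (Real.exp 1 / δ) ≤
        ∑ i, (μ[Y i | ⨆ j : {j : Fin n // j < i}, MeasurableSpace.comap (Y j) Real.measurableSpace]) ω}
      ≤ ENNReal.ofReal δ := by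
  set ℱ := Filtration.strictPast Y hmeas
  have hℱ (i : Fin n) :
      ⨆ j : {j : Fin n // j < i}, MeasurableSpace.comap (Y j) Real.measurableSpace = ℱ i := by
    rw [iSup_subtype, Filtration.strictPast_apply]
    rfl
  simp only [hℱ]
  set f : Fin n → Ω → ℝ := fun i ω ↦ exp ((1 - exp (-1)) * μ[Y i | ℱ i] ω - Y i ω)
  have hf_meas (i : Fin n) : StronglyMeasurable[ℱ ((i : ℕ) + 1)] (f i) := by
    have hX : Measurable[ℱ ((i : ℕ) + 1)] μ[Y i | ℱ i] :=
      stronglyMeasurable_condExp.measurable.mono (ℱ.mono (Nat.le_succ i)) le_rfl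
    have hY : Measurable[ℱ ((i : ℕ) + 1)] (Y i) :=
      Filtration.measurable_strictPast hmeas (Nat.lt_succ_self i)
    exact (measurable_exp.comp ((hX.const_mul _).sub hY)).stronglyMeasurable
  have hf_bdd (i : Fin n) : MemLp (f i) ∞ μ :=
    memLp_top_exp_mul_condExp_sub _ (hmeas i).aestronglyMeasurable (hbound i)
  have hf_int : ∫ ω, ∏ i, f i ω ∂μ ≤ 1 :=
    integral_prod_le_one_of_condExp_le_one ℱ hf_meas hf_bdd
      (fun i ↦ ae_of_all _ fun ω ↦ (exp_pos _).le) fun i ↦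
        condExp_exp_mul_condExp_sub_le_one (ℱ.le i) (hmeas i).aestronglyMeasurable (hbound i)
  refine (measure_mono_ae ?_).trans <| measure_inv_le_le_of_integral_le_one
    (ae_of_all _ fun ω ↦ Finset.prod_nonneg fun i _ ↦ (exp_pos _).le)
    ((MemLp.prod' (p := fun _ ↦ ∞) fun i _ ↦ hf_bdd i).integrable (by simp)) hf_int hδ
  filter_upwards [hsum] with ω hω hT
  change δ⁻¹ ≤ ∏ i, f i ω
  simpa only [f, ← exp_sum, Finset.sum_sub_distrib, ← Finset.mul_sum] using
    inv_le_exp_mul_sub_of_le hδ hω hT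
end

section
/- Fix n ≥ 2, 0 < ε ≤ 1/32, and i ∈ {1,...,n}. Let a = (n-i)/(4n). If rⁱ⁺¹ = (n-i)/(4n), then max{(1/2 + a)·(1/(2n)) + rⁱ⁺¹·(1 - 1/(2n)), (1/4 + a)·(1/n - 16ε/n) + rⁱ⁺¹·(1 - 1/n + 16ε/n)} = (n+1-i)/(4n), and also max{(1/2 + a)·(1/(2n) - 8ε/n) + rⁱ⁺¹·(1 - 1/(2n) + 8ε/n), (1/4 + a)·(1/n) + rⁱ⁺¹·(1 - 1/n)} = (n+1-i)/(4n). -/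
/-! With `a = r`, each continuation value `(c + r) * p + r * (1 - p)` collapses to `r + c * p`,
so each maximum is `r` plus the larger of the two immediate rewards `c * p`. The `ε`-perturbation
lowers one of those rewards by `4ε/n`, and the other one is `1/(4n)` in both cases; adding it to
`r = (n - i)/(4n)` gives `(n + 1 - i)/(4n)`. -/

theorem add_mul_add_mul_of_add_eq_one {R : Type*} [CommRing R] {c r p q : R} (h : p + q = 1) :
    (c + r) * p + r * q = r + c * p := by
  linear_combination r * h

theorem stmt_7_general (n : ℕ) (ε : ℝ) (hε : 0 < ε)
    (i : ℕ) (a r : ℝ)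
    (ha : a = ((n : ℝ) - i) / (4 * n)) (hr : r = ((n : ℝ) - i) / (4 * n)) :
    max ((1 / 2 + a) * (1 / (2 * (n : ℝ))) + r * (1 - 1 / (2 * (n : ℝ))))
        ((1 / 4 + a) * (1 / (n : ℝ) - 16 * ε / n) + r * (1 - 1 / (n : ℝ) + 16 * ε / n))
      = ((n : ℝ) + 1 - i) / (4 * n) ∧
    max ((1 / 2 + a) * (1 / (2 * (n : ℝ)) - 8 * ε / n) + r * (1 - 1 / (2 * (n : ℝ)) + 8 * ε / n))
        ((1 / 4 + a) * (1 / (n : ℝ)) + r * (1 - 1 / (n : ℝ)))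
      = ((n : ℝ) + 1 - i) / (4 * n) := by
  obtain rfl : a = r := ha.trans hr.symm
  have hpenalty : 0 ≤ ε / n := by positivity
  have hvalue : a + 1 / (4 * n) = ((n : ℝ) + 1 - i) / (4 * n) := by rw [ha]; ring
  simp (disch := ring) only [add_mul_add_mul_of_add_eq_one, max_add_add_left]
  have hgap₁ : 1 / 4 * (1 / (n : ℝ) - 16 * ε / n) = 1 / 2 * (1 / (2 * n)) - 4 * (ε / n) := by ring
  have hgap₂ : 1 / 2 * (1 / (2 * (n : ℝ)) - 8 * ε / n) = 1 / 4 * (1 / n) - 4 * (ε / n) := by ring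
  constructor
  · rw [max_eq_left (by linarith), ← hvalue]
    ring
  · rw [max_eq_right (by linarith), ← hvalue]
    ring

theorem stmt_7 (n : ℕ) (hn : 2 ≤ n) (ε : ℝ) (hε : 0 < ε) (hε' : ε ≤ 1 / 32)
    (i : ℕ) (hi : i ∈ Finset.Icc 1 n) (a r : ℝ)
    (ha : a = ((n : ℝ) - i) / (4 * n)) (hr : r = ((n : ℝ) - i) / (4 * n)) :
    max ((1 / 2 + a) * (1 / (2 * (n : ℝ))) + r * (1 - 1 / (2 * (n : ℝ))))
        ((1 / 4 + a) * (1 / (n : ℝ) - 16 * ε / n) + r * (1 - 1 / (n : ℝ) + 16 * ε / n))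
      = ((n : ℝ) + 1 - i) / (4 * n) ∧
    max ((1 / 2 + a) * (1 / (2 * (n : ℝ)) - 8 * ε / n) + r * (1 - 1 / (2 * (n : ℝ)) + 8 * ε / n))
        ((1 / 4 + a) * (1 / (n : ℝ)) + r * (1 - 1 / (n : ℝ)))
      = ((n : ℝ) + 1 - i) / (4 * n) :=
  stmt_7_general n ε hε i a r ha hr
end

section
/- Let n ≥ 2 and ε > 0. Suppose real numbers r₁,...,r_{n+1} satisfy r_{n+1} = 0, and for each i ∈ {1,...,n}: rᵢ - r_{i+1} ≤ 1/(4n) + ((n-i)/(4n) - r_{i+1})·(1/n) if no mistake is made at i, and rᵢ - r_{i+1} ≤ 1/(4n) - 4ε/n + ((n-i)/(4n) - r_{i+1})·(1/n - 16ε/n) if a mistake is made at i. Further suppose (n-i)/(4n) - r_{i+1} ≤ (4ε/n)·min{n-i, M} for all i, where M ∈ {1,...,n} is the total number of mistakes, and (n-i)/(4n) - r_{i+1} ≥ 0. Then r₁ ≤ 1/4 - 2ε·(M/n)·((M+1)/n). -/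
/-!
The gap `g i = (n + 1 - i) / (4n) - r i` vanishes at `i = n + 1` and, read backwards, shrinks by
at most the factor `1 - 1/n` per step while gaining `4ε/n` at each mistake (the extra `-16ε/n` in
the mistake constraint only helps because the gap is nonnegative). Unrolling,
`g 1 ≥ (4ε/n) ∑_{j ∈ S} (1 - 1/n)^(j-1)`. Bernoulli's inequality bounds each weight below by
`(n + 1 - j)/n`, and since the `j ∈ S` are `M` distinct elements of `{1, …, n}`,
`∑_{j ∈ S} (n + 1 - j) ≥ M(M+1)/2`.
-/

open Finset

lemma sum_range_sub_natCast (x : ℝ) (m : ℕ) :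
    ∑ k ∈ range m, (x - k) = m * x - m * (m - 1) / 2 := by
  induction m with
  | zero => simp
  | succ m ih => rw [sum_range_succ, ih]; push_cast; ring

lemma card_mul_card_add_one_le_two_mul_sum (S : Finset ℕ) {n : ℕ} (hS : ∀ j ∈ S, j ≤ n) :
    (#S : ℝ) * (#S + 1) ≤ 2 * ∑ j ∈ S, ((n : ℝ) + 1 - j) := by
  have hsum := sum_le_sum_range (s := S.map Nat.castEmbedding) (c := (n : ℤ))
    (by simpa using hS)
  rw [sum_map, card_map] at hsum
  have hsumR := (Int.cast_le (R := ℝ)).mpr hsum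
  push_cast [Nat.castEmbedding_apply] at hsumR
  rw [sum_range_sub_natCast] at hsumR
  rw [sum_sub_distrib, sum_const, nsmul_eq_mul]
  linarith

lemma sum_pow_mul_le_of_le_mul_add {R : Type*} [CommSemiring R] [PartialOrder R]
    [IsOrderedRing R] {q : R} (hq : 0 ≤ q) {D c : ℕ → R} {N : ℕ} (hN : 0 ≤ D N)
    (hD : ∀ k < N, q * D (k + 1) + c k ≤ D k) :
    ∑ k ∈ range N, q ^ k * c k ≤ D 0 := by
  induction N generalizing D c with
  | zero => simpa using hN
  | succ N ih =>
    have htail : ∑ k ∈ range N, q ^ k * c (k + 1) ≤ D 1 :=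
      ih (D := fun k ↦ D (k + 1)) hN fun k hk ↦ hD (k + 1) (by omega)
    calc ∑ k ∈ range (N + 1), q ^ k * c k
        = q * ∑ k ∈ range N, q ^ k * c (k + 1) + c 0 := by
          simp only [sum_range_succ', mul_sum, pow_succ', mul_assoc, pow_zero, one_mul]
      _ ≤ q * D 1 + c 0 := by gcongr
      _ ≤ D 0 := hD 0 (by omega)

lemma one_sub_div_le_one_sub_one_div_pow {n : ℕ} (hn : n ≠ 0) (k : ℕ) :
    1 - (k : ℝ) / n ≤ (1 - 1 / n) ^ k := by
  have hinv : 1 / (n : ℝ) ≤ 1 :=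
    div_le_one_of_le₀ (by exact_mod_cast Nat.one_le_iff_ne_zero.mpr hn) n.cast_nonneg
  have h := one_add_mul_le_pow (a := -(1 / (n : ℝ))) (by linarith) k
  rwa [mul_neg, mul_one_div, ← sub_eq_add_neg, ← sub_eq_add_neg] at h

lemma card_mul_card_add_one_le_of_recurrence {n : ℕ} (hn : n ≠ 0) {a : ℝ} (ha : 0 ≤ a)
    {D : ℕ → ℝ} {S : Finset ℕ} (hS : S ⊆ Icc 1 n) (hend : 0 ≤ D (n + 1))
    (hD : ∀ i ∈ Icc 1 n, (1 - 1 / n) * D (i + 1) + (if i ∈ S then a else 0) ≤ D i) :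
    a * (#S * (#S + 1)) / (2 * n) ≤ D 1 := by
  set q : ℝ := 1 - 1 / n
  have hq : 0 ≤ q := sub_nonneg.2 <| div_le_one_of_le₀
    (by exact_mod_cast Nat.one_le_iff_ne_zero.mpr hn) n.cast_nonneg
  have hrec := sum_pow_mul_le_of_le_mul_add hq (D := fun k ↦ D (k + 1))
    (c := fun k ↦ if k + 1 ∈ S then a else 0) hend
    fun k hk ↦ hD (k + 1) (mem_Icc.2 ⟨by omega, by omega⟩)
  have hsum : ∑ k ∈ range n, q ^ k * (if k + 1 ∈ S then a else 0) = a * ∑ j ∈ S, q ^ (j - 1) := by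
    let f i := q ^ (i - 1) * (if i ∈ S then a else 0)
    calc ∑ k ∈ range n, q ^ k * (if k + 1 ∈ S then a else 0)
        = ∑ k ∈ Ico 0 n, f (k + 1) := by simp only [f, range_eq_Ico, Nat.add_sub_cancel]
      _ = ∑ i ∈ Icc 1 n, f i := by rw [sum_Ico_add', zero_add, Ico_add_one_right_eq_Icc]
      _ = a * ∑ j ∈ S, q ^ (j - 1) := by
        simp_rw [f, mul_ite, mul_zero, sum_ite_mem, inter_eq_right.mpr hS, mul_sum, mul_comm]
  have hweights : ∑ j ∈ S, ((n : ℝ) + 1 - j) / n ≤ ∑ j ∈ S, q ^ (j - 1) := by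
    refine sum_le_sum fun j hj ↦ ?_
    have hj : 1 ≤ j := (mem_Icc.1 (hS hj)).1
    calc ((n : ℝ) + 1 - j) / n = 1 - ((j - 1 : ℕ) : ℝ) / n := by
          rw [Nat.cast_sub hj]; field_simp; ring
      _ ≤ q ^ (j - 1) := one_sub_div_le_one_sub_one_div_pow hn _
  calc a * (#S * (#S + 1)) / (2 * n) = a * ((#S * (#S + 1) / 2) / n) := by ring
    _ ≤ a * ((∑ j ∈ S, ((n : ℝ) + 1 - j)) / n) := by
        gcongr
        linarith [card_mul_card_add_one_le_two_mul_sum S fun j hj ↦ (mem_Icc.1 (hS hj)).2]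
    _ = a * ∑ j ∈ S, ((n : ℝ) + 1 - j) / n := by rw [sum_div]
    _ ≤ a * ∑ j ∈ S, q ^ (j - 1) := by gcongr
    _ ≤ D 1 := hsum ▸ hrec

noncomputable def benchmarkGap (n : ℕ) (r : ℕ → ℝ) (i : ℕ) : ℝ := ((n : ℝ) + 1 - i) / (4 * n) - r i

lemma benchmarkGap_succ (n : ℕ) (r : ℕ → ℝ) (i : ℕ) :
    benchmarkGap n r (i + 1) = ((n : ℝ) - i) / (4 * n) - r (i + 1) := by
  simp only [benchmarkGap]; push_cast; ring

lemma benchmarkGap_eq_succ_add {n : ℕ} (hn : n ≠ 0) (r : ℕ → ℝ) (i : ℕ) :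
    benchmarkGap n r i = benchmarkGap n r (i + 1) + 1 / (4 * n) - (r i - r (i + 1)) := by
  simp only [benchmarkGap]; push_cast; field_simp; ring

lemma benchmarkGap_one {n : ℕ} (hn : n ≠ 0) (r : ℕ → ℝ) : benchmarkGap n r 1 = 1 / 4 - r 1 := by
  simp only [benchmarkGap]; push_cast; field_simp; ring

theorem stmt_8_general (n : ℕ) (hn : 2 ≤ n) (ε : ℝ) (hε : 0 < ε)
    (r : ℕ → ℝ) (S : Finset ℕ) (hS : S ⊆ Finset.Icc 1 n)
    (M : ℕ) (hM : S.card = M)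
    (hend : r (n + 1) = 0)
    (hno : ∀ i ∈ Finset.Icc 1 n, i ∉ S →
      r i - r (i + 1) ≤ 1 / (4 * (n : ℝ)) + (((n : ℝ) - i) / (4 * n) - r (i + 1)) * (1 / n))
    (hmis : ∀ i ∈ Finset.Icc 1 n, i ∈ S →
      r i - r (i + 1) ≤ 1 / (4 * (n : ℝ)) - 4 * ε / n
        + (((n : ℝ) - i) / (4 * n) - r (i + 1)) * (1 / n - 16 * ε / n))
    (hge : ∀ i ∈ Finset.Icc 1 n, 0 ≤ ((n : ℝ) - i) / (4 * n) - r (i + 1)) :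
    r 1 ≤ 1 / 4 - 2 * ε * ((M : ℝ) / n) * (((M : ℝ) + 1) / n) := by
  have hn0 : n ≠ 0 := by omega
  have hstep : ∀ i ∈ Icc 1 n, (1 - 1 / n) * benchmarkGap n r (i + 1)
      + (if i ∈ S then 4 * ε / n else 0) ≤ benchmarkGap n r i := by
    intro i hi
    rw [benchmarkGap_eq_succ_add hn0 r i]
    have hpos := hge i hi
    rw [← benchmarkGap_succ] at hpos
    split_ifs with hiS
    · have h := hmis i hi hiS
      rw [← benchmarkGap_succ] at h
      have hbonus : 0 ≤ 16 * ε / n * benchmarkGap n r (i + 1) := by positivity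
      linarith
    · have h := hno i hi hiS
      rw [← benchmarkGap_succ] at h
      linarith
  have hbound := card_mul_card_add_one_le_of_recurrence hn0 (by positivity) hS
    (by simp [benchmarkGap, hend]) hstep
  rw [hM, benchmarkGap_one hn0] at hbound
  calc r 1 ≤ 1 / 4 - 4 * ε / n * (M * (M + 1)) / (2 * n) := by linarith
    _ = 1 / 4 - 2 * ε * ((M : ℝ) / n) * (((M : ℝ) + 1) / n) := by field_simp; ring

theorem stmt_8 (n : ℕ) (hn : 2 ≤ n) (ε : ℝ) (hε : 0 < ε)
    (r : ℕ → ℝ) (S : Finset ℕ) (hS : S ⊆ Finset.Icc 1 n)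
    (M : ℕ) (hM : S.card = M) (hM1 : 1 ≤ M)
    (hend : r (n + 1) = 0)
    (hno : ∀ i ∈ Finset.Icc 1 n, i ∉ S →
      r i - r (i + 1) ≤ 1 / (4 * (n : ℝ)) + (((n : ℝ) - i) / (4 * n) - r (i + 1)) * (1 / n))
    (hmis : ∀ i ∈ Finset.Icc 1 n, i ∈ S →
      r i - r (i + 1) ≤ 1 / (4 * (n : ℝ)) - 4 * ε / n
        + (((n : ℝ) - i) / (4 * n) - r (i + 1)) * (1 / n - 16 * ε / n))
    (hgap : ∀ i ∈ Finset.Icc 1 n,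
      ((n : ℝ) - i) / (4 * n) - r (i + 1) ≤ (4 * ε / n) * min ((n : ℝ) - i) (M : ℝ))
    (hge : ∀ i ∈ Finset.Icc 1 n, 0 ≤ ((n : ℝ) - i) / (4 * n) - r (i + 1)) :
    r 1 ≤ 1 / 4 - 2 * ε * ((M : ℝ) / n) * (((M : ℝ) + 1) / n) :=
  stmt_8_general n hn ε hε r S hS M hM hend hno hmis hge
end

section
/- Fix n ≥ 2 and 0 < ε ≤ 1/32. Define p = (√(1/(2n)·(1/(2n) - 8ε/n)) + √((1/(2n) - 16ε/n)·(1/(2n) + 8ε/n)) + √((1 - 1/n + 16ε/n)·(1 - 1/n))). Then there exists a universal constant c > 0 such that p ≥ 1 - c·ε²/n. -/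
lemma aux_sqrt (C x : ℝ) (hC : 0 < C) (hx : 0 ≤ C + x) (hx3 : x ≤ 3*C) :
    C + x/2 - x^2/(2*C) ≤ Real.sqrt (C*(C+x)) := by
  rcases le_or_gt (C + x/2 - x^2/(2*C)) 0 with h | h
  · exact h.trans (Real.sqrt_nonneg _)
  · have key : (C + x/2 - x^2/(2*C))^2 ≤ C*(C+x) := by
      have hC2 : (2*C) ≠ 0 := by positivity
      have ht : x^2/(2*C)*(2*C) = x^2 := div_mul_cancel₀ _ hC2
      nlinarith [mul_nonneg (mul_nonneg (sq_nonneg x) (by linarith : (0:ℝ) ≤ 3*C - x)) hx,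
        sq_nonneg (x^2/(2*C)), sq_nonneg x]
    calc C + x/2 - x^2/(2*C) = Real.sqrt ((C + x/2 - x^2/(2*C))^2) :=
          (Real.sqrt_sq h.le).symm
      _ ≤ Real.sqrt (C*(C+x)) := Real.sqrt_le_sqrt key

set_option maxHeartbeats 1000000 in
theorem stmt_9 : ∃ c : ℝ, 0 < c ∧ ∀ (n : ℕ) (ε : ℝ), 2 ≤ n → 0 < ε → ε ≤ 1 / 32 →
    1 - c * ε ^ 2 / n ≤
      Real.sqrt ((1 / (2 * (n : ℝ))) * (1 / (2 * (n : ℝ)) - 8 * ε / n)) +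
      Real.sqrt ((1 / (2 * (n : ℝ)) - 16 * ε / n) * (1 / (2 * (n : ℝ)) + 8 * ε / n)) +
      Real.sqrt ((1 - 1 / (n : ℝ) + 16 * ε / n) * (1 - 1 / (n : ℝ))) := by
  refine ⟨1000, by norm_num, ?_⟩
  intro n ε hn hε hε'
  have hN : (2:ℝ) ≤ (n:ℝ) := by exact_mod_cast hn
  set N : ℝ := (n:ℝ) with hNdef
  have hN0 : (0:ℝ) < N := by linarith
  have hinv : 1/N ≤ 1/2 := by rw [div_le_div_iff₀ hN0 two_pos]; linarith
  have h8 : 8*ε/N ≤ 1/(2*N) := by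
    rw [div_le_div_iff₀ hN0 (by positivity)]; nlinarith
  have h16 : 16*ε/N ≤ 1/(2*N) := by
    rw [div_le_div_iff₀ hN0 (by positivity)]; nlinarith
  have hεN : 0 < ε/N := div_pos hε hN0
  have h8p : (0:ℝ) ≤ 8*ε/N := by positivity
  have h24p : (0:ℝ) ≤ 24*ε/N := by positivity
  have h12p : (0:ℝ) ≤ 1/(2*N) := by positivity
  have h16p : (0:ℝ) ≤ 16*ε/N := by positivity
  have hsum24 : 24*ε/N = 16*ε/N + 8*ε/N := by ring
  -- term 1
  have h1 : 1/(2*N) + (-(8*ε/N))/2 - (-(8*ε/N))^2/(2*(1/(2*N))) ≤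
      Real.sqrt ((1/(2*N)) * (1/(2*N) + -(8*ε/N))) := by
    apply aux_sqrt _ _ (by positivity) (by linarith) (by linarith)
  -- term 2
  have h2 : (1/(2*N) + 8*ε/N) + (-(24*ε/N))/2 - (-(24*ε/N))^2/(2*(1/(2*N) + 8*ε/N)) ≤
      Real.sqrt ((1/(2*N) + 8*ε/N) * ((1/(2*N) + 8*ε/N) + -(24*ε/N))) := by
    apply aux_sqrt _ _ (by positivity) (by linarith) (by linarith)
  -- term 3
  have h3 : (1 - 1/N) + (16*ε/N)/2 - (16*ε/N)^2/(2*(1 - 1/N)) ≤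
      Real.sqrt ((1 - 1/N) * ((1 - 1/N) + 16*ε/N)) := by
    have h16s : 16*ε/N ≤ 16*ε := div_le_self (by positivity) (by linarith)
    apply aux_sqrt _ _ (by linarith) (by linarith) (by nlinarith [h16s])
  -- rewrite sqrt arguments to match the goal
  have e1 : (1/(2*N)) * (1/(2*N) + -(8*ε/N)) = (1/(2*N)) * (1/(2*N) - 8*ε/N) := by ring
  have e2 : (1/(2*N) + 8*ε/N) * ((1/(2*N) + 8*ε/N) + -(24*ε/N))
      = (1/(2*N) - 16*ε/N) * (1/(2*N) + 8*ε/N) := by ring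
  have e3 : (1 - 1/N) * ((1 - 1/N) + 16*ε/N) = (1 - 1/N + 16*ε/N) * (1 - 1/N) := by ring
  rw [e1] at h1; rw [e2] at h2; rw [e3] at h3
  -- error bounds
  have b1 : (-(8*ε/N))^2/(2*(1/(2*N))) = 64*ε^2/N := by
    field_simp; ring
  have b2 : (-(24*ε/N))^2/(2*(1/(2*N) + 8*ε/N)) ≤ 576*ε^2/N := by
    have hle : 1/N ≤ 2*(1/(2*N) + 8*ε/N) := by
      have : (0:ℝ) ≤ 16*ε/N := by positivity
      have : 2*(1/(2*N) + 8*ε/N) = 1/N + 16*ε/N := by ring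
      linarith
    calc (-(24*ε/N))^2/(2*(1/(2*N) + 8*ε/N)) ≤ (-(24*ε/N))^2/(1/N) := by
          apply div_le_div_of_nonneg_left (by positivity) (one_div_pos.mpr hN0) hle
      _ = 576*ε^2/N := by field_simp; ring
  have b3 : (16*ε/N)^2/(2*(1 - 1/N)) ≤ 256*ε^2/N := by
    have hle : 1 ≤ 2*(1 - 1/N) := by linarith
    calc (16*ε/N)^2/(2*(1 - 1/N)) ≤ (16*ε/N)^2/1 := by
          apply div_le_div_of_nonneg_left (by positivity) (by linarith) hle
      _ = 256*(ε^2/N^2) := by field_simp; ring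
      _ ≤ 256*(ε^2/N) := by
          have : ε^2/N^2 ≤ ε^2/N :=
            div_le_div_of_nonneg_left (sq_nonneg ε) hN0 (by nlinarith)
          linarith
      _ = 256*ε^2/N := by ring
  -- combine
  have hsum : 1/(2*N) + (-(8*ε/N))/2 + ((1/(2*N) + 8*ε/N) + (-(24*ε/N))/2)
      + ((1 - 1/N) + (16*ε/N)/2) = 1 := by field_simp; ring
  have hfin : 1000*ε^2/N - (64*ε^2/N + 576*ε^2/N + 256*ε^2/N) = 104*ε^2/N := by ring
  have hpos : (0:ℝ) ≤ 104*ε^2/N := by positivity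
  have goal' : 1 - 1000*ε^2/N ≤
      Real.sqrt ((1/(2*N)) * (1/(2*N) - 8*ε/N)) +
      Real.sqrt ((1/(2*N) - 16*ε/N) * (1/(2*N) + 8*ε/N)) +
      Real.sqrt ((1 - 1/N + 16*ε/N) * (1 - 1/N)) := by
    linarith [h1, h2, h3]
  convert goal' using 2 <;> push_cast <;> ring
end

section
/- Let v₁,...,vₙ ∈ [0,1] and thresholds π₁,...,πₙ ∈ ℝ, and define the welfare of the policy as v_j where j is the smallest index with v_j ≥ π_j (and 0 if no such index exists). Fix a partition of {1,...,n} into k consecutive intervals I₁,...,I_k, and consider policies constant on each interval, parameterized by ρ = (ρ₁,...,ρ_k) ∈ ℝ^k. Then for any z > 0, there exist l₁,u₁,...,l_k,u_k ∈ ℝ ∪ {±∞} such that {ρ ∈ ℝ^k : welfare(ρ, v) ≥ z} = ⋃_{j=1}^k (u₁,∞) × ··· × (u_{j-1},∞) × (l_j, u_j] × ℝ^{k-j}. -/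
/-
Buyer `i` of block `j` wins iff every buyer of an earlier block rejects, i.e. `ρ b > u_b` for all
`b < j`, and `i` is the first acceptor of `I_j`. Because the blocks are consecutive, that first
acceptor has value `≥ z` exactly when `ρ j` exceeds every value preceding the first value `≥ z`
of `I_j` (`ρ j > l_j`) while some value of `I_j` still accepts (`ρ j ≤ u_j`): the first acceptor
is then the first large value or comes after it, and a rejected large value lies below `ρ j`.
-/

open scoped Classical

/-- The index of the first buyer `i` (in order) whose value `v i` meets the posted price `π i`. -/
noncomputable def firstWinner {n : ℕ} (v π : Fin n → ℝ) : Option (Fin n) :=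
  (List.finRange n).find? (fun i => decide (π i ≤ v i))

/-- The welfare of the posted-pricing policy `π` on values `v`: the value of the first buyer
who accepts, or `0` if no buyer accepts. -/
noncomputable def welfare {n : ℕ} (v π : Fin n → ℝ) : ℝ :=
  match firstWinner v π with
  | some i => v i
  | none => 0

section Welfare

variable {n : ℕ} {v π : Fin n → ℝ}

theorem firstWinner_eq_some_iff {i : Fin n} :
    firstWinner v π = some i ↔ π i ≤ v i ∧ ∀ j < i, v j < π j := by
  simp only [firstWinner, List.find?_eq_some_iff_getElem, decide_eq_true_eq, Bool.not_eq_true',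
    decide_eq_false_iff_not, not_le, List.getElem_finRange, List.length_finRange]
  constructor
  · rintro ⟨hi, m, hm, rfl, hbefore⟩
    exact ⟨hi, fun j hj => hbefore j hj⟩
  · rintro ⟨hi, hbefore⟩
    exact ⟨hi, i, i.isLt, rfl, fun j hj => hbefore ⟨j, hj.trans i.isLt⟩ hj⟩

theorem le_welfare_iff {z : ℝ} (hz : 0 < z) :
    z ≤ welfare v π ↔ ∃ i, π i ≤ v i ∧ (∀ j < i, v j < π j) ∧ z ≤ v i := by
  unfold welfare
  constructor
  · split
    · next i hi =>
      obtain ⟨hacc, hrej⟩ := firstWinner_eq_some_iff.1 hi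
      exact fun hzi => ⟨i, hacc, hrej, hzi⟩
    · intro h; linarith
  · rintro ⟨i, hacc, hrej, hzi⟩
    rw [firstWinner_eq_some_iff.2 ⟨hacc, hrej⟩]
    exact hzi

theorem exists_first_accept {m : Fin n} (hm : π m ≤ v m) :
    ∃ w ≤ m, π w ≤ v w ∧ ∀ j < w, v j < π j := by
  obtain ⟨w, hw⟩ := Option.isSome_iff_exists.1 (show (firstWinner v π).isSome by
    simpa [firstWinner, List.find?_isSome] using ⟨m, hm⟩)
  obtain ⟨hacc, hrej⟩ := firstWinner_eq_some_iff.1 hw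
  exact ⟨w, not_lt.1 fun hmw => (hrej m hmw).not_ge hm, hacc, hrej⟩

end Welfare

section Blocks

variable {n k : ℕ} (v : Fin n → ℝ) (blk : Fin n → Fin k) (z : ℝ)

noncomputable def blockSup (j : Fin k) : EReal :=
  (Finset.univ.filter (blk · = j)).sup (fun i => (v i : EReal))

/-- The paper's `l_j`: the supremum (`⊥` if empty) of the values of block `j` that precede its
first value `≥ z`. -/
noncomputable def blockSupBefore (j : Fin k) : EReal :=
  (Finset.univ.filter (fun i => blk i = j ∧ ∀ i' ≤ i, blk i' = j → v i' < z)).sup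
    (fun i => (v i : EReal))

variable {v blk z}

theorem blockSup_lt_coe_iff {j : Fin k} {x : ℝ} :
    blockSup v blk j < x ↔ ∀ i, blk i = j → v i < x := by
  simp [blockSup]

theorem coe_le_blockSup_iff {j : Fin k} {x : ℝ} :
    (x : EReal) ≤ blockSup v blk j ↔ ∃ i, blk i = j ∧ x ≤ v i := by
  simp [blockSup]

theorem blockSupBefore_lt_coe_iff {j : Fin k} {x : ℝ} :
    blockSupBefore v blk z j < x ↔
      ∀ i, blk i = j → (∀ i' ≤ i, blk i' = j → v i' < z) → v i < x := by
  simp [blockSupBefore]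

variable (hmono : Monotone blk) {ρ : Fin k → ℝ}
include hmono

theorem cell_conditions_of_first_accept {i : Fin n} (hacc : ρ (blk i) ≤ v i)
    (hrej : ∀ i' < i, v i' < ρ (blk i')) (hzi : z ≤ v i) :
    (∀ b < blk i, ∀ i', blk i' = b → v i' < ρ b) ∧
      (∀ i', blk i' = blk i → (∀ i'' ≤ i', blk i'' = blk i → v i'' < z) → v i' < ρ (blk i)) ∧
      ∃ i', blk i' = blk i ∧ ρ (blk i) ≤ v i' := by
  refine ⟨fun b hb i' hi' => ?_, fun i' hi' hbefore => ?_, ⟨i, rfl, hacc⟩⟩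
  · subst hi'
    exact hrej i' (hmono.reflect_lt hb)
  · have hlt : i' < i := not_le.1 fun hle => (hbefore i hle rfl).not_ge hzi
    exact hi' ▸ hrej i' hlt

theorem exists_first_accept_of_cell_conditions {j : Fin k}
    (hearlier : ∀ b < j, ∀ i, blk i = b → v i < ρ b)
    (hlow : ∀ i, blk i = j → (∀ i' ≤ i, blk i' = j → v i' < z) → v i < ρ j)
    (hup : ∃ i, blk i = j ∧ ρ j ≤ v i) :
    ∃ w, ρ (blk w) ≤ v w ∧ (∀ i < w, v i < ρ (blk i)) ∧ z ≤ v w := by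
  obtain ⟨m, rfl, hm⟩ := hup
  obtain ⟨w, hwm, hacc, hrej⟩ := exists_first_accept (π := fun i => ρ (blk i)) hm
  have hblk : blk w = blk m := (hmono hwm).eq_of_not_lt fun hlt =>
    (hearlier _ hlt w rfl).not_ge hacc
  refine ⟨w, hacc, hrej, ?_⟩
  -- Some value `≥ z` of the block comes no later than `w`, otherwise `w` would be rejected.
  obtain ⟨i, hiw, hi, hzi⟩ : ∃ i ≤ w, blk i = blk m ∧ z ≤ v i := by
    by_contra! h
    exact (hlow w hblk fun i hiw hi => h i hiw hi).not_ge (hblk ▸ hacc)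
  rcases hiw.lt_or_eq with hiw | rfl
  · have := hrej i hiw
    rw [hi, ← hblk] at this
    linarith
  · exact hzi

end Blocks

theorem stmt_11_general (n k : ℕ) (v : Fin n → ℝ)
    (blk : Fin n → Fin k) (hmono : Monotone blk)
    (z : ℝ) (hz : 0 < z) :
    ∃ l u : Fin k → EReal,
      {ρ : Fin k → ℝ | z ≤ welfare v (fun i => ρ (blk i))} =
        ⋃ j : Fin k, {ρ : Fin k → ℝ |
          (∀ i : Fin k, i < j → u i < (ρ i : EReal)) ∧
          l j < (ρ j : EReal) ∧ (ρ j : EReal) ≤ u j} := by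
  refine ⟨blockSupBefore v blk z, blockSup v blk, Set.ext fun ρ => ?_⟩
  simp only [Set.mem_ofPred_eq, Set.mem_iUnion, blockSup_lt_coe_iff, blockSupBefore_lt_coe_iff,
    coe_le_blockSup_iff, le_welfare_iff hz]
  constructor
  · rintro ⟨i, hacc, hrej, hzi⟩
    exact ⟨blk i, cell_conditions_of_first_accept hmono hacc hrej hzi⟩
  · rintro ⟨j, hearlier, hlow, hup⟩
    exact exists_first_accept_of_cell_conditions hmono hearlier hlow hup

theorem stmt_11 (n k : ℕ) (v : Fin n → ℝ) (hv : ∀ i, v i ∈ Set.Icc (0 : ℝ) 1)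
    (blk : Fin n → Fin k) (hmono : Monotone blk) (hsurj : Function.Surjective blk)
    (z : ℝ) (hz : 0 < z) :
    ∃ l u : Fin k → EReal,
      {ρ : Fin k → ℝ | z ≤ welfare v (fun i => ρ (blk i))} =
        ⋃ j : Fin k, {ρ : Fin k → ℝ |
          (∀ i : Fin k, i < j → u i < (ρ i : EReal)) ∧
          l j < (ρ j : EReal) ∧ (ρ j : EReal) ≤ u j} :=
  stmt_11_general n k v blk hmono z hz
end
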